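/- Fix κ ∈ (8/3,8) and set h = (6−κ)/(2κ). The function Φ(ξ,y,z) = (z−y)^{2/κ} (y−ξ)^{1−8/κ} (z−ξ)^{1−8/κ}, defined on the open set {(ξ,y,z) ∈ ℝ³ : ξ < y < z}, satisfies the third-order BPZ partial differential equation ∂³Φ/∂ξ³ − (16/κ)·[ (h/(y−ξ)²)·(∂Φ/∂ξ) − (1/(y−ξ))·∂²Φ/∂y∂ξ + (h/(z−ξ)²)·(∂Φ/∂ξ) − (1/(z−ξ))·∂²Φ/∂z∂ξ ] + (8(8−κ)/κ²)·[ (2h/(y−ξ)³)·Φ − (1/(y−ξ)²)·(∂Φ/∂y) + (2h/(z−ξ)³)·Φ − (1/(z−ξ)²)·(∂Φ/∂z) ] = 0 at every point with ξ < y < z. -/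

import Mathlib

/-!
Every factor of `Φ` is a real power of an affine function, so each partial derivative of `Φ` is
`Φ` times a rational function, its logarithmic derivative. With `β = 1 - 8/κ`, for instance,
`∂_ξ Φ = Φ g` where `g = -β/(y-ξ) - β/(z-ξ)`, hence `∂³_ξ Φ = Φ (g³ + 3 g g' + g'')`; the mixed
derivatives follow from the product rule in the same way. After division by `Φ` the BPZ equation
is an identity between rational functions of `ξ, y, z, κ`, checked by clearing denominators.
-/

/-- The fused three-point function `Φ(ξ,y,z) = (z−y)^{2/κ}(y−ξ)^{1−8/κ}(z−ξ)^{1−8/κ}`. -/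
noncomputable def Phi (κ ξ y z : ℝ) : ℝ :=
  (z - y) ^ (2/κ) * (y - ξ) ^ (1 - 8/κ) * (z - ξ) ^ (1 - 8/κ)

open Filter Topology

theorem HasDerivAt.rpow_const_logDeriv {f : ℝ → ℝ} {f' x : ℝ} (p : ℝ)
    (hf : HasDerivAt f f' x) (hx : f x ≠ 0) :
    HasDerivAt (fun y => f y ^ p) (f x ^ p * (p * f' / f x)) x := by
  convert hf.rpow_const (p := p) (Or.inl hx) using 1
  rw [Real.rpow_sub_one hx]
  ring

theorem HasDerivAt.mul_logDeriv {f g : ℝ → ℝ} {a b x : ℝ} (hf : HasDerivAt f (f x * a) x)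
    (hg : HasDerivAt g (g x * b) x) :
    HasDerivAt (fun y => f y * g y) (f x * g x * (a + b)) x :=
  (hf.mul hg).congr_deriv (by ring)

theorem HasDerivAt.const_div {f : ℝ → ℝ} {f' x : ℝ} (k : ℝ) (hf : HasDerivAt f f' x)
    (hx : f x ≠ 0) : HasDerivAt (fun y => k / f y) (-(k * f') / f x ^ 2) x :=
  ((hasDerivAt_const x k).fun_div hf hx).congr_deriv (by ring)

theorem iter_deriv_three_of_hasDerivAt_eq_mul {f g g' g'' : ℝ → ℝ} {s : Set ℝ}
    (hs : IsOpen s) (hf : ∀ x ∈ s, HasDerivAt f (f x * g x) x)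
    (hg : ∀ x ∈ s, HasDerivAt g (g' x) x) (hg' : ∀ x ∈ s, HasDerivAt g' (g'' x) x)
    {x : ℝ} (hx : x ∈ s) :
    deriv^[3] f x = f x * (g x ^ 3 + 3 * g x * g' x + g'' x) := by
  have hf' : ∀ x ∈ s, HasDerivAt (deriv f) (f x * (g x ^ 2 + g' x)) x := fun x hx =>
    (((hf x hx).mul (hg x hx)).congr_deriv (by ring)).congr_of_eventuallyEq
      (eventually_of_mem (hs.mem_nhds hx) fun y hy => (hf y hy).deriv)
  have hf'' : HasDerivAt (deriv (deriv f)) (f x * (g x ^ 3 + 3 * g x * g' x + g'' x)) x :=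
    (((hf x hx).mul (((hg x hx).fun_pow 2).fun_add (hg' x hx))).congr_deriv
      (by simp only [Nat.cast_ofNat, Nat.add_one_sub_one, pow_one]; ring)).congr_of_eventuallyEq
      (eventually_of_mem (hs.mem_nhds hx) fun y hy => (hf' y hy).deriv)
  exact hf''.deriv

section Phi

variable {κ ξ y z : ℝ}

local notation "α" => 2 / κ
local notation "β" => 1 - 8 / κ

theorem hasDerivAt_Phi_fst (hy : ξ < y) (hz : ξ < z) :
    HasDerivAt (fun t => Phi κ t y z) (Phi κ ξ y z * (-β / (y - ξ) - β / (z - ξ))) ξ := by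
  have hc := (hasDerivAt_const ξ ((z - y) ^ α)).congr_deriv (mul_zero ((z - y) ^ α)).symm
  have hY := ((hasDerivAt_id ξ).const_sub y).rpow_const_logDeriv β (sub_pos.2 hy).ne'
  have hZ := ((hasDerivAt_id ξ).const_sub z).rpow_const_logDeriv β (sub_pos.2 hz).ne'
  exact ((hc.mul_logDeriv hY).mul_logDeriv hZ).congr_deriv (by simp only [Phi, id]; ring)

theorem hasDerivAt_Phi_snd (hξ : ξ < y) (hz : y < z) :
    HasDerivAt (fun s => Phi κ ξ s z) (Phi κ ξ y z * (-α / (z - y) + β / (y - ξ))) y := by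
  have hc := (hasDerivAt_const y ((z - ξ) ^ β)).congr_deriv (mul_zero ((z - ξ) ^ β)).symm
  have hZ := ((hasDerivAt_id y).const_sub z).rpow_const_logDeriv α (sub_pos.2 hz).ne'
  have hX := ((hasDerivAt_id y).sub_const ξ).rpow_const_logDeriv β (sub_pos.2 hξ).ne'
  exact ((hZ.mul_logDeriv hX).mul_logDeriv hc).congr_deriv (by simp only [Phi, id]; ring)

theorem hasDerivAt_Phi_thd (hξ : ξ < z) (hy : y < z) :
    HasDerivAt (fun s => Phi κ ξ y s) (Phi κ ξ y z * (α / (z - y) + β / (z - ξ))) z := by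
  have hc := (hasDerivAt_const z ((y - ξ) ^ β)).congr_deriv (mul_zero ((y - ξ) ^ β)).symm
  have hY := ((hasDerivAt_id z).sub_const y).rpow_const_logDeriv α (sub_pos.2 hy).ne'
  have hX := ((hasDerivAt_id z).sub_const ξ).rpow_const_logDeriv β (sub_pos.2 hξ).ne'
  exact ((hY.mul_logDeriv hc).mul_logDeriv hX).congr_deriv (by simp only [Phi, id]; ring)

theorem iter_deriv_three_Phi_fst (hy : ξ < y) (hz : ξ < z) :
    deriv^[3] (fun t => Phi κ t y z) ξ = Phi κ ξ y z *
      ((-β / (y - ξ) - β / (z - ξ)) ^ 3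
        + 3 * (-β / (y - ξ) - β / (z - ξ)) * (-β / (y - ξ) ^ 2 - β / (z - ξ) ^ 2)
        + (-2 * β / (y - ξ) ^ 3 - 2 * β / (z - ξ) ^ 3)) := by
  have hg : ∀ t ∈ Set.Iio y ∩ Set.Iio z,
      HasDerivAt (fun t => -β / (y - t) - β / (z - t))
        (-β / (y - t) ^ 2 - β / (z - t) ^ 2) t := by
    rintro t ⟨hty : t < y, htz : t < z⟩
    exact ((((hasDerivAt_id t).const_sub y).const_div _ (sub_pos.2 hty).ne').fun_sub
      (((hasDerivAt_id t).const_sub z).const_div _ (sub_pos.2 htz).ne')).congr_deriv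
      (by simp only [id]; ring)
  have hg' : ∀ t ∈ Set.Iio y ∩ Set.Iio z,
      HasDerivAt (fun t => -β / (y - t) ^ 2 - β / (z - t) ^ 2)
        (-2 * β / (y - t) ^ 3 - 2 * β / (z - t) ^ 3) t := by
    rintro t ⟨hty : t < y, htz : t < z⟩
    have hyt := (sub_pos.2 hty).ne'
    have hzt := (sub_pos.2 htz).ne'
    refine (((((hasDerivAt_id t).const_sub y).fun_pow 2).const_div _ (pow_ne_zero 2 hyt)).fun_sub
      ((((hasDerivAt_id t).const_sub z).fun_pow 2).const_div _ (pow_ne_zero 2 hzt))).congr_deriv ?_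
    simp only [id]
    field_simp
    ring
  exact iter_deriv_three_of_hasDerivAt_eq_mul (isOpen_Iio.inter isOpen_Iio)
    (fun t ht => hasDerivAt_Phi_fst ht.1 ht.2) hg hg' ⟨hy, hz⟩

theorem deriv_deriv_Phi_fst_snd (hξ : ξ < y) (hz : y < z) :
    deriv (fun s => deriv (fun t => Phi κ t s z) ξ) y = Phi κ ξ y z *
      ((-α / (z - y) + β / (y - ξ)) * (-β / (y - ξ) - β / (z - ξ)) + β / (y - ξ) ^ 2) := by
  have hξz := hξ.trans hz
  have hderiv : (fun s => deriv (fun t => Phi κ t s z) ξ) =ᶠ[𝓝 y]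
      fun s => Phi κ ξ s z * (-β / (s - ξ) - β / (z - ξ)) :=
    eventually_of_mem (Ioi_mem_nhds hξ) fun s (hs : ξ < s) => (hasDerivAt_Phi_fst hs hξz).deriv
  have hg := (((hasDerivAt_id y).sub_const ξ).const_div (-β) (sub_pos.2 hξ).ne').sub_const
    (β / (z - ξ))
  refine (((hasDerivAt_Phi_snd hξ hz).mul hg).congr_of_eventuallyEq hderiv).deriv.trans ?_
  simp only [id]
  ring

theorem deriv_deriv_Phi_fst_thd (hξ : ξ < y) (hy : y < z) :
    deriv (fun s => deriv (fun t => Phi κ t y s) ξ) z = Phi κ ξ y z *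
      ((α / (z - y) + β / (z - ξ)) * (-β / (y - ξ) - β / (z - ξ)) + β / (z - ξ) ^ 2) := by
  have hξz := hξ.trans hy
  have hderiv : (fun s => deriv (fun t => Phi κ t y s) ξ) =ᶠ[𝓝 z]
      fun s => Phi κ ξ y s * (-β / (y - ξ) - β / (s - ξ)) :=
    eventually_of_mem (Ioi_mem_nhds hξz) fun s (hs : ξ < s) => (hasDerivAt_Phi_fst hξ hs).deriv
  have hg := (((hasDerivAt_id z).sub_const ξ).const_div β (sub_pos.2 hξz).ne').const_sub
    (-β / (y - ξ))
  refine (((hasDerivAt_Phi_thd hξz hy).mul hg).congr_of_eventuallyEq hderiv).deriv.trans ?_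
  simp only [id]
  ring

end Phi

/-- for `κ ∈ (8/3,8)` and `h = (6−κ)/(2κ)`, the function `Φ` satisfies
the third-order BPZ PDE `∂³_ξΦ − (16/κ)𝓛₋₂∂_ξΦ + (8(8−κ)/κ²)𝓛₋₃Φ = 0` at every point
with `ξ < y < z`. -/
theorem statement6 (κ : ℝ) (hκ : κ ∈ Set.Ioo (8/3 : ℝ) 8)
    (ξ y z : ℝ) (hξy : ξ < y) (hyz : y < z) :
    deriv^[3] (fun t => Phi κ t y z) ξ
      - (16/κ) *
        (((6 - κ) / (2 * κ) / (y - ξ)^2) * deriv (fun t => Phi κ t y z) ξ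
          - (1 / (y - ξ)) * deriv (fun s => deriv (fun t => Phi κ t s z) ξ) y
          + ((6 - κ) / (2 * κ) / (z - ξ)^2) * deriv (fun t => Phi κ t y z) ξ
          - (1 / (z - ξ)) * deriv (fun s => deriv (fun t => Phi κ t y s) ξ) z)
      + (8 * (8 - κ) / κ^2) *
        ((2 * ((6 - κ) / (2 * κ)) / (y - ξ)^3) * Phi κ ξ y z
          - (1 / (y - ξ)^2) * deriv (fun s => Phi κ ξ s z) y
          + (2 * ((6 - κ) / (2 * κ)) / (z - ξ)^3) * Phi κ ξ y z
          - (1 / (z - ξ)^2) * deriv (fun s => Phi κ ξ y s) z) = 0 := by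
  have hξz := hξy.trans hyz
  rw [iter_deriv_three_Phi_fst hξy hξz, (hasDerivAt_Phi_fst hξy hξz).deriv,
    deriv_deriv_Phi_fst_snd hξy hyz, deriv_deriv_Phi_fst_thd hξy hyz,
    (hasDerivAt_Phi_snd hξy hyz).deriv, (hasDerivAt_Phi_thd hξz hyz).deriv]
  have hκ0 : κ ≠ 0 := (by linarith [hκ.1] : (0 : ℝ) < κ).ne'
  have hu := (sub_pos.2 hξy).ne'
  have hv := (sub_pos.2 hξz).ne'
  have hw := (sub_pos.2 hyz).ne'
  field_simp
  ring
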